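/- Five-term (pentagon-type) q-binomial identity: for nonnegative integers β₁, β₂ and integers r₁, r₂, [r₂ choose β₁]_q · [β₁ - r₁ choose β₂]_q = Σ q^{k₁k₃} [−r₁ choose k₁]_q · [−r₁ + r₂ − k₁ choose k₂]_q · [−β₂ + r₂ choose k₃]_q, where the sum is over nonnegative integers k₁, k₂, k₃ with k₂ + k₃ = β₁ and k₁ + k₂ = β₂. -/
import Mathlib


noncomputable section
open Finset

/-- The field ℚ(q) of rational functions over ℚ; `q` denotes the variable. -/
abbrev K : Type := RatFunc ℚ

def q : K := RatFunc.X

/-- The q-Pochhammer-style q-binomial coefficient `[m choose k]_z` with base `z`,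
`[m choose k]_z = (z^{m-k+1};z)_k / (z;z)_k`, defined for any `m : ℤ` and `k : ℕ`. -/
def qbin (z : K) (m : ℤ) (k : ℕ) : K :=
  (∏ i ∈ Finset.range k, (1 - z ^ (m - k + 1 + i))) /
    (∏ i ∈ Finset.range k, (1 - z ^ (i + 1)))

lemma q_ne_zero : q ≠ 0 := RatFunc.X_ne_zero

lemma q_pow_ne_one {n : ℕ} (hn : n ≠ 0) : (q : K) ^ (n : ℕ) ≠ 1 := by
  intro h
  rw [q, ← RatFunc.algebraMap_X, ← map_pow, ← map_one (algebraMap (Polynomial ℚ) (RatFunc ℚ))] at h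
  have h2 := RatFunc.algebraMap_injective ℚ h
  have := congrArg Polynomial.natDegree h2
  simp [Polynomial.natDegree_X_pow] at this
  exact hn this

/-- numerator product in convenient form -/
def Np (m : ℤ) (k : ℕ) : K := ∏ i ∈ Finset.range k, (1 - q ^ (m - i))

def Dp (k : ℕ) : K := ∏ i ∈ Finset.range k, (1 - q ^ ((i : ℤ) + 1))

lemma Dp_ne_zero (k : ℕ) : Dp k ≠ 0 := by
  refine Finset.prod_ne_zero_iff.2 fun i _ => ?_
  have : (q : K) ^ ((i : ℤ) + 1) = q ^ (i + 1 : ℕ) := by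
    rw [← zpow_natCast]; norm_num
  rw [this]
  intro h
  have : (q : K) ^ (i + 1 : ℕ) = 1 := by linear_combination -h
  exact q_pow_ne_one (Nat.succ_ne_zero i) this

lemma qbin_eq (m : ℤ) (k : ℕ) : qbin q m k = Np m k / Dp k := by
  have h1 : (∏ i ∈ Finset.range k, (1 - q ^ (m - k + 1 + i))) = Np m k := by
    rw [Np, ← Finset.prod_range_reflect]
    refine Finset.prod_congr rfl fun i hi => ?_
    rw [Finset.mem_range] at hi
    have h2 : ((k - 1 - i : ℕ) : ℤ) = (k : ℤ) - 1 - i := by omega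
    rw [h2, show m - (k:ℤ) + 1 + ((k:ℤ) - 1 - i) = m - i by ring]
  have h4 : (∏ i ∈ Finset.range k, (1 - q ^ (i + 1))) = Dp k := by
    rw [Dp]
    refine Finset.prod_congr rfl fun i hi => ?_
    rw [show ((i:ℤ) + 1) = ((i + 1 : ℕ) : ℤ) by push_cast; ring, zpow_natCast]
  rw [qbin, h1, h4]

lemma Np_succ (m : ℤ) (k : ℕ) : Np m (k + 1) = Np m k * (1 - q ^ (m - k)) := by
  rw [Np, Finset.prod_range_succ]; rfl

lemma Np_succ' (m : ℤ) (k : ℕ) : Np m (k + 1) = (1 - q ^ m) * Np (m - 1) k := by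
  rw [Np, Finset.prod_range_succ']
  rw [mul_comm]
  congr 1
  · simp
  · refine Finset.prod_congr rfl fun i _ => ?_
    congr 1
    push_cast; ring

lemma Dp_succ (k : ℕ) : Dp (k + 1) = Dp k * (1 - q ^ ((k : ℤ) + 1)) := by
  rw [Dp, Finset.prod_range_succ]; rfl

lemma qbin_zero (m : ℤ) : qbin q m 0 = 1 := by simp [qbin]

-- [n, k] = 0 for natural n < k
lemma qbin_nat_eq_zero {n k : ℕ} (h : n < k) : qbin q (n : ℤ) k = 0 := by
  rw [qbin_eq]
  have : Np (n : ℤ) k = 0 := by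
    rw [Np]
    refine Finset.prod_eq_zero (Finset.mem_range.2 h) ?_
    simp
  rw [this, zero_div]

lemma zpow_add_q (a b : ℤ) : (q:K) ^ (a + b) = q ^ a * q ^ b := zpow_add₀ q_ne_zero a b

/-- Pascal I -/
lemma qbin_pascal (m : ℤ) (k : ℕ) :
    qbin q m (k + 1) = qbin q (m - 1) (k + 1) + q ^ (m - (k:ℤ) - 1) * qbin q (m - 1) k := by
  have key : (1:K) - q ^ m = (1 - q ^ (m - 1 - (k:ℤ))) + q ^ (m - (k:ℤ) - 1) * (1 - q ^ ((k:ℤ) + 1)) := by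
    have e1 : (q:K) ^ (m - (k:ℤ) - 1) * q ^ ((k:ℤ) + 1) = q ^ m := by
      rw [← zpow_add_q]; congr 1; ring
    have e2 : m - 1 - (k:ℤ) = m - (k:ℤ) - 1 := by ring
    rw [e2, mul_sub, mul_one, e1]; ring
  rw [qbin_eq, qbin_eq, qbin_eq, Np_succ' m k, Dp_succ, Np_succ (m-1) k, key]
  have hD := Dp_ne_zero k
  have hx : Dp (k+1) ≠ 0 := Dp_ne_zero (k+1)
  rw [Dp_succ] at hx
  have hx' : (1:K) - q ^ ((k:ℤ) + 1) ≠ 0 := fun h => hx (by rw [h, mul_zero])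
  field_simp

/-- Pascal II -/
lemma qbin_pascal' (m : ℤ) (k : ℕ) :
    qbin q m (k + 1) = qbin q (m - 1) k + q ^ ((k:ℤ) + 1) * qbin q (m - 1) (k + 1) := by
  have key : (1:K) - q ^ m = (1 - q ^ ((k:ℤ) + 1)) + q ^ ((k:ℤ) + 1) * (1 - q ^ (m - 1 - (k:ℤ))) := by
    have e1 : (q:K) ^ ((k:ℤ) + 1) * q ^ (m - 1 - (k:ℤ)) = q ^ m := by
      rw [← zpow_add_q]; congr 1; ring
    rw [mul_sub, mul_one, e1]; ring
  rw [qbin_eq, qbin_eq, qbin_eq, Np_succ' m k, Dp_succ, Np_succ (m-1) k, key]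
  have hD := Dp_ne_zero k
  have hx : Dp (k+1) ≠ 0 := Dp_ne_zero (k+1)
  rw [Dp_succ] at hx
  have hx' : (1:K) - q ^ ((k:ℤ) + 1) ≠ 0 := fun h => hx (by rw [h, mul_zero])
  field_simp

lemma Np_split' (a : ℤ) (c d : ℕ) :
    Np a (c + d) = Np a c * Np (a - c) d := by
  rw [Np, Np, Np, Finset.prod_range_add]
  congr 1
  refine Finset.prod_congr rfl fun i _ => ?_
  congr 1
  push_cast; ring

lemma Np_split (a : ℤ) {b c : ℕ} (h : c ≤ b) :
    Np a b = Np a c * Np (a - c) (b - c) := by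
  have := Np_split' a c (b - c)
  rw [show c + (b - c) = b by omega] at this
  exact this

lemma Np_nat_mul_Dp' (k d : ℕ) : Np ((k + d : ℕ) : ℤ) k * Dp d = Dp (k + d) := by
  have h1 : Np ((k + d : ℕ):ℤ) k = ∏ i ∈ Finset.range k, (1 - q ^ ((d:ℤ) + 1 + i)) := by
    rw [Np, ← Finset.prod_range_reflect]
    refine Finset.prod_congr rfl fun i hi => ?_
    rw [Finset.mem_range] at hi
    congr 1
    have : ((k - 1 - i : ℕ) : ℤ) = (k:ℤ) - 1 - i := by omega
    rw [this]
    push_cast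
    ring
  rw [h1, Dp, Dp, show k + d = d + k by omega, Finset.prod_range_add, mul_comm]
  congr 1
  refine Finset.prod_congr rfl fun i _ => ?_
  congr 1
  push_cast; ring

lemma Np_nat_mul_Dp {n k : ℕ} (h : k ≤ n) : Np (n:ℤ) k * Dp (n - k) = Dp n := by
  have := Np_nat_mul_Dp' k (n - k)
  rw [show k + (n - k) = n by omega] at this
  exact this

lemma Np_nat_ne_zero {n k : ℕ} (h : k ≤ n) : Np (n:ℤ) k ≠ 0 := by
  intro h0
  have := Np_nat_mul_Dp h
  rw [h0, zero_mul] at this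
  exact Dp_ne_zero n this.symm

/-- symmetry -/
lemma qbin_symm {n k : ℕ} (h : k ≤ n) : qbin q (n:ℤ) k = qbin q (n:ℤ) (n - k) := by
  rw [qbin_eq, qbin_eq]
  have h1 := Np_nat_mul_Dp h
  have h2 := Np_nat_mul_Dp (Nat.sub_le n k)
  rw [show n - (n - k) = k by omega] at h2
  have hk := Dp_ne_zero k
  have hnk := Dp_ne_zero (n - k)
  rw [div_eq_div_iff hk hnk]
  calc Np (n:ℤ) k * Dp (n - k) = Dp n := h1
  _ = Np (n:ℤ) (n - k) * Dp k := h2.symm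

/-- trinomial revision -/
lemma qbin_trinomial (a : ℤ) {b c : ℕ} (h : c ≤ b) :
    qbin q a b * qbin q (b:ℤ) c = qbin q a c * qbin q (a - c) (b - c) := by
  rw [qbin_eq, qbin_eq, qbin_eq, qbin_eq, Np_split a h]
  have h1 := Np_nat_mul_Dp h
  have hb := Dp_ne_zero b
  have hc := Dp_ne_zero c
  have hbc := Dp_ne_zero (b - c)
  have hN := Np_nat_ne_zero h
  field_simp
  rw [← h1]
  ring

/-- RHS of q-Vandermonde -/
def vdmRHS (m n : ℤ) (k : ℕ) : K :=
  ∑ j ∈ Finset.range (k+1), q ^ ((m - j) * ((k:ℤ) - j)) * qbin q m j * qbin q n (k - j)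

lemma vdm_step (m n : ℤ) (k : ℕ) :
    vdmRHS m (n+1) (k+1)
      = vdmRHS m n (k+1) + q ^ (m + n - (k:ℤ)) * vdmRHS m n k := by
  unfold vdmRHS
  have hterm : ∀ j ∈ Finset.range (k+1),
      q ^ ((m - j) * (((k+1:ℕ):ℤ) - j)) * qbin q m j * qbin q (n+1) (k+1-j)
      = q ^ ((m - j) * (((k+1:ℕ):ℤ) - j)) * qbin q m j * qbin q n (k+1-j)
        + q ^ (m + n - (k:ℤ)) * (q ^ ((m - j) * ((k:ℤ) - j)) * qbin q m j * qbin q n (k-j)) := by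
    intro j hj
    rw [Finset.mem_range] at hj
    have hj' : j ≤ k := by omega
    have e0 : k + 1 - j = (k - j) + 1 := by omega
    have p := qbin_pascal (n+1) (k-j)
    rw [show n + 1 - 1 = n by ring] at p
    rw [show ((k - j:ℕ):ℤ) = (k:ℤ) - j by omega] at p
    rw [e0, p]
    have hq : (q:K) ^ ((m - j) * (((k+1:ℕ):ℤ) - j)) * q ^ (n + 1 - ((k:ℤ) - j) - 1)
        = q ^ (m + n - (k:ℤ)) * q ^ ((m - j) * ((k:ℤ) - j)) := by
      rw [← zpow_add_q, ← zpow_add_q]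
      congr 1
      push_cast
      ring
    linear_combination (qbin q m j * qbin q n (k - j)) * hq
  rw [Finset.sum_range_succ, Finset.sum_range_succ
    (f := fun j => q ^ ((m - j) * (((k+1:ℕ):ℤ) - j)) * qbin q m j * qbin q n (k+1-j)),
    Finset.sum_congr rfl hterm, Finset.sum_add_distrib, Finset.mul_sum]
  simp [qbin_zero]
  ring

lemma qbin_zero_upper {c : ℕ} (hc : 0 < c) : qbin q (0:ℤ) c = 0 := by
  have : ((0:ℕ):ℤ) = (0:ℤ) := by norm_num
  rw [← this]
  exact qbin_nat_eq_zero hc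

lemma vdmRHS_zero (m n : ℤ) : vdmRHS m n 0 = 1 := by
  simp [vdmRHS, qbin_zero]

lemma vdm_nat (m : ℤ) (n : ℕ) : ∀ k : ℕ, qbin q (m + n) k = vdmRHS m n k := by
  induction n with
  | zero =>
    intro k
    unfold vdmRHS
    rw [Finset.sum_range_succ]
    have h0 : ∀ j ∈ Finset.range k,
        q ^ ((m - j) * ((k:ℤ) - j)) * qbin q m j * qbin q ((0:ℕ):ℤ) (k - j) = 0 := by
      intro j hj
      rw [Finset.mem_range] at hj
      rw [Nat.cast_zero, qbin_zero_upper (by omega)]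
      ring
    rw [Finset.sum_congr rfl h0]
    simp [qbin_zero]
  | succ n ih =>
    intro k
    cases k with
    | zero => simp [vdmRHS_zero, qbin_zero]
    | succ k =>
      have p := qbin_pascal (m + n + 1) k
      rw [show m + (n:ℤ) + 1 - 1 = m + n by ring] at p
      have s := vdm_step m n k
      have e : m + ((n+1:ℕ):ℤ) = m + (n:ℤ) + 1 := by push_cast; ring
      rw [e, show ((n+1:ℕ):ℤ) = (n:ℤ)+1 by push_cast; ring, p, s, ih (k+1), ih k]
      rw [show m + (n:ℤ) + 1 - (k:ℤ) - 1 = m + n - (k:ℤ) by ring]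

lemma vdm_down (m n : ℤ) (H : ∀ k, qbin q (m + (n+1)) k = vdmRHS m (n+1) k) :
    ∀ k, qbin q (m + n) k = vdmRHS m n k := by
  intro k
  induction k with
  | zero => simp [vdmRHS_zero, qbin_zero]
  | succ k ih =>
    have p := qbin_pascal (m + n + 1) k
    rw [show m + (n:ℤ) + 1 - 1 = m + n by ring,
      show m + (n:ℤ) + 1 - (k:ℤ) - 1 = m + n - (k:ℤ) by ring] at p
    have s := vdm_step m n k
    have h := H (k+1)
    rw [show m + ((n:ℤ)+1) = m + n + 1 by ring] at h
    linear_combination h - p + s - q ^ (m + n - (k:ℤ)) * ih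

lemma vdm (m n : ℤ) (k : ℕ) : qbin q (m + n) k = vdmRHS m n k := by
  have key : ∀ t : ℕ, ∀ nn : ℤ, 0 ≤ nn + t → ∀ k, qbin q (m + nn) k = vdmRHS m nn k := by
    intro t
    induction t with
    | zero =>
      intro nn h k
      simp only [Nat.cast_zero, add_zero] at h
      obtain ⟨n', rfl⟩ : ∃ n' : ℕ, nn = (n' : ℤ) := ⟨nn.toNat, (Int.toNat_of_nonneg h).symm⟩
      exact vdm_nat m n' k
    | succ t ih =>
      intro nn h k
      refine vdm_down m nn (fun k' => ?_) k
      refine ih (nn + 1) (by push_cast at h ⊢; omega) k'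
  exact key (-n).toNat n (by omega) k

lemma reindex (β₁ β₂ : ℕ) (F : ℕ → ℕ → K) (h0 : ∀ s j, s < j → F s j = 0) :
    (∑ s ∈ Finset.range (β₂+1), if β₂ ≤ β₁ + s then
        ∑ j ∈ Finset.range (β₁ + s - β₂ + 1), F s j else 0)
    = ∑ k ∈ Finset.range (β₂+1), if β₂ ≤ β₁ + k then
        ∑ l ∈ Finset.range (β₂ - k + 1), F (k + l) l else 0 := by
  set B := β₁ + β₂ + 1 with hB
  have hL : ∀ s ∈ Finset.range (β₂+1),
      (if β₂ ≤ β₁ + s then ∑ j ∈ Finset.range (β₁ + s - β₂ + 1), F s j else 0)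
      = ∑ j ∈ Finset.range B, if β₂ ≤ β₁ + s ∧ j ≤ β₁ + s - β₂ ∧ j ≤ s then F s j else 0 := by
    intro s hs
    rw [Finset.mem_range] at hs
    by_cases hc : β₂ ≤ β₁ + s
    · rw [if_pos hc]
      have step1 : ∑ j ∈ Finset.range (β₁ + s - β₂ + 1), F s j
          = ∑ j ∈ Finset.range (β₁ + s - β₂ + 1),
              (if β₂ ≤ β₁ + s ∧ j ≤ β₁ + s - β₂ ∧ j ≤ s then F s j else 0) := by
        refine Finset.sum_congr rfl fun j hj => ?_
        rw [Finset.mem_range] at hj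
        by_cases hjs : j ≤ s
        · rw [if_pos ⟨hc, by omega, hjs⟩]
        · rw [if_neg (by tauto), h0 s j (by omega)]
      rw [step1]
      refine Finset.sum_subset (Finset.range_subset_range.2 (by omega)) fun j _ hj => ?_
      rw [Finset.mem_range] at hj
      rw [if_neg (by omega)]
    · rw [if_neg hc]
      rw [Finset.sum_eq_zero fun j _ => by rw [if_neg (by tauto)]]
  have hR : ∀ k ∈ Finset.range (β₂+1),
      (if β₂ ≤ β₁ + k then ∑ l ∈ Finset.range (β₂ - k + 1), F (k + l) l else 0)
      = ∑ l ∈ Finset.range B, if β₂ ≤ β₁ + k ∧ k + l ≤ β₂ then F (k + l) l else 0 := by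
    intro k hk
    rw [Finset.mem_range] at hk
    by_cases hc : β₂ ≤ β₁ + k
    · rw [if_pos hc]
      have step1 : ∑ l ∈ Finset.range (β₂ - k + 1), F (k + l) l
          = ∑ l ∈ Finset.range (β₂ - k + 1),
              (if β₂ ≤ β₁ + k ∧ k + l ≤ β₂ then F (k + l) l else 0) := by
        refine Finset.sum_congr rfl fun l hl => ?_
        rw [Finset.mem_range] at hl
        rw [if_pos ⟨hc, by omega⟩]
      rw [step1]
      refine Finset.sum_subset (Finset.range_subset_range.2 (by omega)) fun l _ hl => ?_
      rw [Finset.mem_range] at hl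
      rw [if_neg (by omega)]
    · rw [if_neg hc]
      rw [Finset.sum_eq_zero fun l _ => by rw [if_neg (by tauto)]]
  rw [Finset.sum_congr rfl hL, Finset.sum_congr rfl hR,
    ← Finset.sum_product', ← Finset.sum_product']
  rw [Finset.sum_ite, Finset.sum_ite]
  simp only [Finset.sum_const_zero, add_zero]
  refine Finset.sum_nbij' (fun p => (p.1 - p.2, p.2)) (fun p => (p.1 + p.2, p.2)) ?_ ?_ ?_ ?_ ?_
  · rintro ⟨s, j⟩ hp
    simp only [Finset.mem_filter, Finset.mem_product, Finset.mem_range] at hp ⊢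
    omega
  · rintro ⟨k, l⟩ hp
    simp only [Finset.mem_filter, Finset.mem_product, Finset.mem_range] at hp ⊢
    omega
  · rintro ⟨s, j⟩ hp
    simp only [Finset.mem_filter, Finset.mem_product, Finset.mem_range] at hp
    have : j ≤ s := hp.2.2.2
    dsimp only
    simp only [Prod.mk.injEq]
    exact ⟨by omega, trivial⟩
  · rintro ⟨k, l⟩ hp
    dsimp only
    simp only [Prod.mk.injEq]
    exact ⟨by omega, trivial⟩
  · rintro ⟨s, j⟩ hp
    simp only [Finset.mem_filter, Finset.mem_product, Finset.mem_range] at hp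
    have hjs : j ≤ s := hp.2.2.2
    dsimp only
    rw [show s - j + j = s by omega]

/-- the common double-sum term -/
def Ff (β₁ β₂ : ℕ) (r₁ r₂ : ℤ) (s j : ℕ) : K :=
  q ^ ((-r₁ - (s:ℤ)) * ((β₂:ℤ) - s) + ((s:ℤ) - j) * ((β₁:ℤ) - β₂ + s - j))
    * qbin q (-r₁) s * qbin q (s:ℤ) j * qbin q r₂ (β₂ - s)
    * qbin q (r₂ - (β₂:ℤ)) (β₁ + (s - j) - β₂)

lemma Ff_zero (β₁ β₂ : ℕ) (r₁ r₂ : ℤ) : ∀ s j, s < j → Ff β₁ β₂ r₁ r₂ s j = 0 := by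
  intro s j h
  unfold Ff
  rw [qbin_nat_eq_zero h]
  ring

lemma lhs_eq (β₁ β₂ : ℕ) (r₁ r₂ : ℤ) :
    qbin q r₂ β₁ * qbin q ((β₁ : ℤ) - r₁) β₂
    = ∑ s ∈ Finset.range (β₂+1), if β₂ ≤ β₁ + s then
        ∑ j ∈ Finset.range (β₁ + s - β₂ + 1), Ff β₁ β₂ r₁ r₂ s j else 0 := by
  rw [show (β₁:ℤ) - r₁ = -r₁ + (β₁:ℤ) by ring, vdm, vdmRHS, Finset.mul_sum]
  refine Finset.sum_congr rfl fun s hs => ?_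
  rw [Finset.mem_range] at hs
  have hs' : s ≤ β₂ := by omega
  by_cases hc : β₂ ≤ β₁ + s
  · rw [if_pos hc]
    have key : qbin q r₂ β₁ * qbin q ((β₁:ℕ):ℤ) (β₂ - s)
        = qbin q r₂ (β₂ - s) * ∑ j ∈ Finset.range (β₁ + s - β₂ + 1),
            q ^ (((s:ℤ) - j) * (((β₁ + s - β₂ : ℕ):ℤ) - j)) * qbin q (s:ℤ) j
              * qbin q (r₂ - (β₂:ℤ)) (β₁ + s - β₂ - j) := by
      rw [qbin_trinomial r₂ (show β₂ - s ≤ β₁ by omega)]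
      congr 1
      rw [show β₁ - (β₂ - s) = β₁ + s - β₂ by omega,
        show r₂ - ((β₂ - s : ℕ):ℤ) = (s:ℤ) + (r₂ - (β₂:ℤ)) by
          rw [Nat.cast_sub hs']; ring,
        vdm, vdmRHS]
    calc qbin q r₂ β₁ * (q ^ ((-r₁ - (s:ℤ)) * ((β₂:ℤ) - s)) * qbin q (-r₁) s
            * qbin q ((β₁:ℕ):ℤ) (β₂ - s))
        = q ^ ((-r₁ - (s:ℤ)) * ((β₂:ℤ) - s)) * qbin q (-r₁) s
            * (qbin q r₂ β₁ * qbin q ((β₁:ℕ):ℤ) (β₂ - s)) := by ring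
      _ = ∑ j ∈ Finset.range (β₁ + s - β₂ + 1),
            q ^ ((-r₁ - (s:ℤ)) * ((β₂:ℤ) - s)) * qbin q (-r₁) s
            * (qbin q r₂ (β₂ - s) * (q ^ (((s:ℤ) - j) * (((β₁ + s - β₂ : ℕ):ℤ) - j))
                * qbin q (s:ℤ) j * qbin q (r₂ - (β₂:ℤ)) (β₁ + s - β₂ - j))) := by
          rw [key, Finset.mul_sum, Finset.mul_sum]
      _ = ∑ j ∈ Finset.range (β₁ + s - β₂ + 1), Ff β₁ β₂ r₁ r₂ s j := by
          refine Finset.sum_congr rfl fun j hj => ?_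
          unfold Ff
          have hcast : (((β₁ + s - β₂ : ℕ):ℤ) - j) = ((β₁:ℤ) - β₂ + s - j) := by omega
          have hq : (q:K) ^ ((-r₁ - (s:ℤ)) * ((β₂:ℤ) - s) + ((s:ℤ) - j) * ((β₁:ℤ) - β₂ + s - j))
              = q ^ ((-r₁ - (s:ℤ)) * ((β₂:ℤ) - s)) * q ^ (((s:ℤ) - j) * (((β₁ + s - β₂ : ℕ):ℤ) - j)) := by
            rw [hcast, zpow_add_q]
          by_cases hjs : j ≤ s
          · rw [show β₁ + (s - j) - β₂ = β₁ + s - β₂ - j by omega, hq]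
            ring
          · rw [qbin_nat_eq_zero (show s < j by omega)]
            ring
  · rw [if_neg hc]
    rw [qbin_nat_eq_zero (show β₁ < β₂ - s by omega)]
    ring

lemma rhs_collapse (β₁ β₂ : ℕ) (r₁ r₂ : ℤ) :
    (∑ k₁ ∈ Finset.range (β₂ + 1), ∑ k₂ ∈ Finset.range (β₂ + 1), ∑ k₃ ∈ Finset.range (β₁ + 1),
        if k₂ + k₃ = β₁ ∧ k₁ + k₂ = β₂ then
          q ^ (k₁ * k₃) * qbin q (-r₁) k₁ * qbin q (-r₁ + r₂ - k₁) k₂ *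
            qbin q (-(β₂ : ℤ) + r₂) k₃
        else 0)
    = ∑ k₁ ∈ Finset.range (β₂ + 1), if β₂ ≤ β₁ + k₁ then
        q ^ (k₁ * (β₁ - (β₂ - k₁))) * qbin q (-r₁) k₁ * qbin q (-r₁ + r₂ - k₁) (β₂ - k₁) *
          qbin q (-(β₂ : ℤ) + r₂) (β₁ - (β₂ - k₁))
      else 0 := by
  refine Finset.sum_congr rfl fun k₁ hk₁ => ?_
  rw [Finset.mem_range] at hk₁
  have hk₁' : k₁ ≤ β₂ := by omega
  rw [Finset.sum_eq_single (β₂ - k₁)]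
  · by_cases hc : β₂ ≤ β₁ + k₁
    · rw [if_pos hc, Finset.sum_eq_single (β₁ - (β₂ - k₁))]
      · rw [if_pos ⟨by omega, by omega⟩]
      · intro k₃ _ hne
        rw [if_neg (by omega)]
      · intro habs
        exact absurd (Finset.mem_range.2 (by omega)) habs
    · rw [if_neg hc]
      refine Finset.sum_eq_zero fun k₃ hk₃ => ?_
      rw [Finset.mem_range] at hk₃
      rw [if_neg (by omega)]
  · intro k₂ _ hne
    refine Finset.sum_eq_zero fun k₃ _ => ?_
    rw [if_neg (by omega)]
  · intro habs
    exact absurd (Finset.mem_range.2 (by omega)) habs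

lemma rhs_eq (β₁ β₂ : ℕ) (r₁ r₂ : ℤ) :
    (∑ k₁ ∈ Finset.range (β₂ + 1), ∑ k₂ ∈ Finset.range (β₂ + 1), ∑ k₃ ∈ Finset.range (β₁ + 1),
        if k₂ + k₃ = β₁ ∧ k₁ + k₂ = β₂ then
          q ^ (k₁ * k₃) * qbin q (-r₁) k₁ * qbin q (-r₁ + r₂ - k₁) k₂ *
            qbin q (-(β₂ : ℤ) + r₂) k₃
        else 0)
    = ∑ k₁ ∈ Finset.range (β₂+1), if β₂ ≤ β₁ + k₁ then
        ∑ l ∈ Finset.range (β₂ - k₁ + 1), Ff β₁ β₂ r₁ r₂ (k₁ + l) l else 0 := by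
  rw [rhs_collapse]
  refine Finset.sum_congr rfl fun k₁ hk₁ => ?_
  rw [Finset.mem_range] at hk₁
  have hk₁' : k₁ ≤ β₂ := by omega
  by_cases hc : β₂ ≤ β₁ + k₁
  · rw [if_pos hc, if_pos hc]
    have hv : qbin q (-r₁ + r₂ - (k₁:ℤ)) (β₂ - k₁) = vdmRHS (-r₁ - (k₁:ℤ)) r₂ (β₂ - k₁) := by
      rw [show -r₁ + r₂ - (k₁:ℤ) = (-r₁ - (k₁:ℤ)) + r₂ by ring]
      exact vdm _ _ _
    rw [hv, vdmRHS, Finset.mul_sum, Finset.sum_mul]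
    refine Finset.sum_congr rfl fun l hl => ?_
    rw [Finset.mem_range] at hl
    have hl' : l ≤ β₂ - k₁ := by omega
    unfold Ff
    -- normalize the arguments of Ff
    rw [show β₂ - (k₁ + l) = β₂ - k₁ - l by omega,
      show (k₁ + l) - l = k₁ by omega,
      show β₁ + k₁ - β₂ = β₁ - (β₂ - k₁) by omega,
      show r₂ - (β₂:ℤ) = -(β₂:ℤ) + r₂ by ring]
    -- trinomial + symmetry
    have tri := qbin_trinomial (-r₁) (show k₁ ≤ k₁ + l by omega)
    rw [show k₁ + l - k₁ = l by omega] at tri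
    have hsym := qbin_symm (show k₁ ≤ k₁ + l by omega)
    rw [show k₁ + l - k₁ = l by omega] at hsym
    rw [hsym] at tri
    -- tri : qbin q (-r₁) (k₁+l) * qbin q ↑(k₁+l) l = qbin q (-r₁) k₁ * qbin q (-r₁ - ↑k₁) l
    -- exponent bookkeeping
    have hq : (q:K) ^ ((-r₁ - ((k₁ + l : ℕ):ℤ)) * ((β₂:ℤ) - ((k₁ + l : ℕ):ℤ))
          + (((k₁ + l : ℕ):ℤ) - (l:ℕ)) * ((β₁:ℤ) - β₂ + ((k₁ + l : ℕ):ℤ) - (l:ℕ)))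
        = q ^ (k₁ * (β₁ - (β₂ - k₁))) * q ^ ((-r₁ - (k₁:ℤ) - l) * (((β₂ - k₁ : ℕ):ℤ) - l)) := by
      have e1 : (q:K) ^ (k₁ * (β₁ - (β₂ - k₁))) = q ^ (((k₁ * (β₁ - (β₂ - k₁)) : ℕ)) : ℤ) := by
        rw [zpow_natCast]
      rw [e1, ← zpow_add_q]
      congr 1
      have e2 : ((k₁ * (β₁ - (β₂ - k₁)) : ℕ) : ℤ) = (k₁:ℤ) * ((β₁:ℤ) - β₂ + k₁) := by
        rw [Nat.cast_mul, show ((β₁ - (β₂ - k₁) : ℕ):ℤ) = (β₁:ℤ) - β₂ + k₁ by omega]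
      rw [e2, show ((β₂ - k₁ : ℕ):ℤ) = (β₂:ℤ) - k₁ by omega]
      push_cast
      ring
    rw [hq]
    linear_combination (-(q ^ (k₁ * (β₁ - (β₂ - k₁)))) * q ^ ((-r₁ - (k₁:ℤ) - l) * (((β₂ - k₁ : ℕ):ℤ) - l))
      * qbin q r₂ (β₂ - k₁ - l) * qbin q (-(β₂:ℤ) + r₂) (β₁ - (β₂ - k₁))) * tri
  · rw [if_neg hc, if_neg hc]

/-- Five-term (pentagon-type) q-binomial identity. -/
theorem five_term (β₁ β₂ : ℕ) (r₁ r₂ : ℤ) :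
    qbin q r₂ β₁ * qbin q ((β₁ : ℤ) - r₁) β₂ =
      ∑ k₁ ∈ Finset.range (β₂ + 1), ∑ k₂ ∈ Finset.range (β₂ + 1), ∑ k₃ ∈ Finset.range (β₁ + 1),
        if k₂ + k₃ = β₁ ∧ k₁ + k₂ = β₂ then
          q ^ (k₁ * k₃) * qbin q (-r₁) k₁ * qbin q (-r₁ + r₂ - k₁) k₂ *
            qbin q (-(β₂ : ℤ) + r₂) k₃
        else 0 := by
  rw [lhs_eq β₁ β₂ r₁ r₂, rhs_eq β₁ β₂ r₁ r₂]
  exact reindex β₁ β₂ (Ff β₁ β₂ r₁ r₂) (Ff_zero β₁ β₂ r₁ r₂)
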